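/- For all w, z ∈ A⁺, f̌(wz) = f̌(f̌(w) f̌(z)), where wz denotes concatenation of words and f̌(w) f̌(z) is concatenation of the words f̌(w), f̌(z) over the alphabet X = A ∪ A_G. -/

import Mathlib

open List

variable {A : Type*} {G : Type*} {A_G : Type*}

/-- `L̈`: the words not in `L` whose maximal proper prefix and suffix are in `L`. -/
def Ddot (L : Set (List A)) : Set (List A) :=
  {v | v ∉ L ∧ v.dropLast ∈ L ∧ v.tail ∈ L}

/-- `IsSc L w s` : `s` is the sequence of coordinates of `w` determined by `L`,
via the recursive construction of the paper: if `w ∈ L` then `s = (w)`; otherwise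
select an occurrence `w = w' v w''` of a factor `v ∈ L̈` and put
`s = sc_L[w' v_α] (v) sc_L[v_ω w'']`. -/
inductive IsSc (L : Set (List A)) : List A → List (List A) → Prop
  | base (w : List A) (hw : w ∈ L) : IsSc L w [w]
  | step (w' w'' v : List A) (s₁ s₂ : List (List A)) (hv : v ∈ Ddot L)
      (h₁ : IsSc L (w' ++ v.dropLast) s₁) (h₂ : IsSc L (v.tail ++ w'') s₂) :
      IsSc L (w' ++ v ++ w'') (s₁ ++ v :: s₂)

open Classical in
/-- `sc_L[w]`, the sequence of coordinates of `w` determined by `L`. -/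
noncomputable def scL (L : Set (List A)) (w : List A) : List (List A) :=
  if h : ∃ s, IsSc L w s then h.choose else []
section CoreG
variable [Group G]

/-- Evaluation of a word over `A_G` in the group `G`. -/
def evalW (evA : A_G → G) (u : List A_G) : G := (u.map evA).prod

/-- `f̂ : A* → G`. -/
noncomputable def fhat (L : Set (List A)) (f : List A → G) (w : List A) : G :=
  ((scL L w).map f).prod

/-- first coordinate (word part of `f̀`). -/
noncomputable def graveWord (L : Set (List A)) (w : List A) : List A :=
  (scL L w).headI

/-- group part of `f̀`. -/
noncomputable def graveG (L : Set (List A)) (f : List A → G) (w : List A) : G :=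
  ((scL L w).tail.map f).prod

/-- last coordinate (word part of `f́`). -/
noncomputable def acuteWord (L : Set (List A)) (w : List A) : List A :=
  (scL L w).getLastD []

/-- group part of `f́`. -/
noncomputable def acuteG (L : Set (List A)) (f : List A → G) (w : List A) : G :=
  ((scL L w).dropLast.map f).prod

/-- The word over `X = A ⊕ A_G` determined by a coordinate sequence:
`w₀ f(ẅ₁)f(w₁)⋯f(ẅ_m) w_m`, the middle group element written as its
chosen representative word over `A_G`. -/
def checkOfSeq (f : List A → G) (rep : G → List A_G) :
    List (List A) → List (A ⊕ A_G)
  | [] => []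
  | [w] => w.map Sum.inl
  | w :: rest =>
      w.map Sum.inl ++ (rep ((rest.dropLast.map f).prod)).map Sum.inr ++
        (rest.getLastD []).map Sum.inl

/-- longest prefix of `A`-letters. -/
def takeA : List (A ⊕ A_G) → List A
  | Sum.inl a :: r => a :: takeA r
  | _ => []

def dropA : List (A ⊕ A_G) → List (A ⊕ A_G)
  | Sum.inl _ :: r => dropA r
  | w => w

/-- longest prefix of `A_G`-letters. -/
def takeG : List (A ⊕ A_G) → List A_G
  | Sum.inr b :: r => b :: takeG r
  | _ => []

def dropG : List (A ⊕ A_G) → List (A ⊕ A_G)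
  | Sum.inr _ :: r => dropG r
  | w => w

/-- Processing of the part `g₁u₁g₂u₂⋯g_nu_n` of a mixed word: returns the group
element `eval(g₁)·f̂(u₁)·…·eval(g_n)·(acute part of u_n)` together with the final
word coordinate of `u_n`.  (Fuel-based recursion.) -/
noncomputable def midRunAux (L : Set (List A)) (f : List A → G) (evA : A_G → G) :
    ℕ → List (A ⊕ A_G) → G × List A
  | 0, _ => (1, [])
  | n + 1, w =>
      match dropA (dropG w) with
      | [] => (evalW evA (takeG w) * acuteG L f (takeA (dropG w)),
               acuteWord L (takeA (dropG w)))
      | r' => (evalW evA (takeG w) * fhat L f (takeA (dropG w)) *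
                 (midRunAux L f evA n r').1,
               (midRunAux L f evA n r').2)

/-- The extension `f̌ : X⁺ → Z ⊆ X⁺` of `f̌` to mixed words
(`f̌(u₀g₁u₁⋯g_nu_n) = f̀(u₀) g₁ f̂(u₁) ⋯ g_n f́(u_n)`, the middle group
element written as its representative word). -/
noncomputable def fcheckX (L : Set (List A)) (f : List A → G) (evA : A_G → G)
    (rep : G → List A_G) (w : List (A ⊕ A_G)) : List (A ⊕ A_G) :=
  match dropA w with
  | [] => checkOfSeq f rep (scL L (takeA w))
  | r =>
      (graveWord L (takeA w)).map Sum.inl ++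
        (rep (graveG L f (takeA w) * (midRunAux L f evA r.length r).1)).map Sum.inr ++
        (midRunAux L f evA r.length r).2.map Sum.inl

end CoreG

/-!
The sequence of coordinates is unique: occurrences of factors from `L̈` cannot be nested, and when
two of them cross, both decompositions refine to a common one, so induction on the length applies.
Uniqueness makes `sc_L` compatible with concatenation: `sc_L[wz]` is `sc_L[w]` followed by
`sc_L[z]`, with the last coordinate `a` of `w` and the first coordinate `b` of `z` replaced by
`sc_L[ab]`. Both sides of the identity are then read off from these coordinates; there is one case
for each choice of whether `w` and `z` lie in `L`, with at most two group blocks to evaluate.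
-/

section Words
variable {α : Type*}

theorem exists_eq_append_of_append_eq_append {a b c d : List α} (h : a ++ b = c ++ d)
    (hl : a.length ≤ c.length) : ∃ e, c = a ++ e ∧ b = e ++ d := by
  rcases List.append_eq_append_iff.1 h with he | ⟨e, rfl, rfl⟩
  · exact he
  · obtain rfl : e = [] := by simpa using hl
    exact ⟨[], by simp, by simp⟩

/-- `c` is the factor between the first letter of `v` and the start of `u`, and `d` the one between
the end of `v` and the last letter of `u`. -/
theorem exists_append_of_overlap {p₁ v q₁ p₂ u q₂ : List α} (h : p₁ ++ v ++ q₁ = p₂ ++ u ++ q₂)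
    (hstart : p₁.length < p₂.length) (hend : p₁.length + v.length < p₂.length + u.length) :
    ∃ c d, v.tail ++ q₁ = c ++ u ++ q₂ ∧ p₂ ++ u.dropLast = p₁ ++ v ++ d ∧
      v.tail ++ d = c ++ u.dropLast := by
  obtain ⟨e, rfl, he⟩ := exists_eq_append_of_append_eq_append
    (b := v ++ q₁) (d := u ++ q₂) (by simpa using h) hstart.le
  rcases le_or_gt v.length e.length with hve | hev
  · obtain ⟨e₂, rfl, rfl⟩ := exists_eq_append_of_append_eq_append he hve
    exact ⟨v.tail ++ e₂, e₂ ++ u.dropLast, by simp, by simp, by simp⟩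
  · obtain ⟨v₂, rfl, hv₂⟩ := exists_eq_append_of_append_eq_append he.symm hev.le
    simp only [List.length_append] at hstart hend
    obtain ⟨u₂, rfl, rfl⟩ := exists_eq_append_of_append_eq_append hv₂.symm (by omega)
    simp only [List.length_append] at hend
    obtain ⟨e₀, e', rfl⟩ :=
      List.exists_cons_of_ne_nil (List.ne_nil_of_length_pos (l := e) (by omega))
    have hu₂ : u₂ ≠ [] := List.ne_nil_of_length_pos (by omega)
    exact ⟨e', u₂.dropLast, by simp, by simp [List.dropLast_append_of_ne_nil hu₂],
      by simp [List.dropLast_append_of_ne_nil hu₂]⟩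

theorem exists_append_of_nested {p₁ v q₁ p₂ u q₂ : List α} (h : p₁ ++ v ++ q₁ = p₂ ++ u ++ q₂)
    (hstart : p₂.length ≤ p₁.length) (hend : p₁.length + v.length ≤ p₂.length + u.length) :
    ∃ x y, u = x ++ v ++ y ∧ p₁ = p₂ ++ x ∧ q₁ = y ++ q₂ := by
  obtain ⟨x, rfl, hx⟩ := exists_eq_append_of_append_eq_append
    (b := u ++ q₂) (d := v ++ q₁) (by simpa using h.symm) hstart
  simp only [List.length_append] at hend
  obtain ⟨y, rfl, rfl⟩ := exists_eq_append_of_append_eq_append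
    (a := x ++ v) (by simpa using hx.symm) (by simp only [List.length_append]; omega)
  exact ⟨x, y, rfl, rfl, rfl⟩

end Words

structure IsFactorial (L : Set (List A)) : Prop where
  nil_notMem : [] ∉ L
  mem_of_infix : ∀ u w : List A, w ∈ L → u ≠ [] → u <:+: w → u ∈ L
  singleton_mem : ∀ a : A, [a] ∈ L

section Coordinates
variable {L : Set (List A)}

theorem two_le_length_of_mem_ddot (hE : [] ∉ L) {v : List A} (hv : v ∈ Ddot L) :
    2 ≤ v.length := by
  match v, hv with
  | [], hv => exact absurd hv.2.1 hE
  | [_], hv => exact absurd hv.2.1 hE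
  | _ :: _ :: _, _ => simp

theorem not_infix_of_mem_ddot (hL : IsFactorial L) {v w : List A} (hv : v ∈ Ddot L)
    (hw : w ∈ L) : ¬ v <:+: w := fun hvw =>
  hv.1 (hL.mem_of_infix v w hw
    (List.ne_nil_of_length_pos (by have := two_le_length_of_mem_ddot hL.nil_notMem hv; omega))
    hvw)

theorem eq_nil_of_mem_ddot_of_eq_append (hL : IsFactorial L) {u v x y : List A}
    (hv : v ∈ Ddot L) (hu : u ∈ Ddot L) (h : u = x ++ v ++ y) : x = [] ∧ y = [] := by
  subst h
  constructor
  · refine by_contra fun hx => not_infix_of_mem_ddot hL hv hu.2.2 ?_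
    rw [List.append_assoc, List.tail_append_of_ne_nil hx, ← List.append_assoc]
    exact List.infix_append _ _ _
  · refine by_contra fun hy => not_infix_of_mem_ddot hL hv hu.2.1 ?_
    rw [List.dropLast_append_of_ne_nil hy]
    exact List.infix_append _ _ _

/-- A proper factor of a word of `L̈` lies in `L`, so occurrences of factors from `L̈` cannot be
nested: two of them coincide or cross. -/
theorem eq_or_overlap_of_mem_ddot (hL : IsFactorial L) {p₁ v q₁ p₂ u q₂ : List A}
    (hv : v ∈ Ddot L) (hu : u ∈ Ddot L) (h : p₁ ++ v ++ q₁ = p₂ ++ u ++ q₂) :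
    (p₁ = p₂ ∧ v = u ∧ q₁ = q₂) ∨
      (∃ c d, v.tail ++ q₁ = c ++ u ++ q₂ ∧ p₂ ++ u.dropLast = p₁ ++ v ++ d ∧
        v.tail ++ d = c ++ u.dropLast) ∨
      (∃ c d, u.tail ++ q₂ = c ++ v ++ q₁ ∧ p₁ ++ v.dropLast = p₂ ++ u ++ d ∧
        u.tail ++ d = c ++ v.dropLast) := by
  wlog hend : p₁.length + v.length ≤ p₂.length + u.length generalizing p₁ v q₁ p₂ u q₂
  · rcases this hu hv h.symm (by omega) with ⟨rfl, rfl, rfl⟩ | hc | hc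
    · exact .inl ⟨rfl, rfl, rfl⟩
    · exact .inr (.inr hc)
    · exact .inr (.inl hc)
  rcases le_or_gt p₂.length p₁.length with hstart | hstart
  · obtain ⟨x, y, rfl, rfl, rfl⟩ := exists_append_of_nested h hstart hend
    obtain ⟨rfl, rfl⟩ := eq_nil_of_mem_ddot_of_eq_append hL hv hu rfl
    simp
  rcases hend.lt_or_eq with hend | hend
  · exact .inr (.inl (exists_append_of_overlap h hstart hend))
  · obtain ⟨x, y, rfl, rfl, rfl⟩ := exists_append_of_nested h.symm hstart.le hend.ge
    obtain ⟨rfl, rfl⟩ := eq_nil_of_mem_ddot_of_eq_append hL hu hv rfl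
    simp at hstart

theorem exists_mem_ddot_of_notMem (hA : ∀ a : A, [a] ∈ L) {w : List A} (hw : w ∉ L)
    (hne : w ≠ []) : ∃ p v q, v ∈ Ddot L ∧ w = p ++ v ++ q := by
  induction hn : w.length using Nat.strong_induction_on generalizing w with
  | _ n ih =>
  have hlen : 2 ≤ w.length := by
    match w, hw, hne with
    | [a], hw, _ => exact absurd (hA a) hw
    | _ :: _ :: _, _, _ => simp
  by_cases hd : w.dropLast ∈ L
  · by_cases ht : w.tail ∈ L
    · exact ⟨[], w, [], ⟨hw, hd, ht⟩, by simp⟩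
    · obtain ⟨p, v, q, hv, he⟩ := ih _ (by simp only [List.length_tail]; omega) ht
        (List.ne_nil_of_length_pos (by simp only [List.length_tail]; omega)) rfl
      obtain ⟨a, w', rfl⟩ := List.exists_cons_of_ne_nil hne
      rw [List.tail_cons] at he
      exact ⟨a :: p, v, q, hv, by simp [he]⟩
  · obtain ⟨p, v, q, hv, he⟩ := ih _ (by simp only [List.length_dropLast]; omega) hd
      (List.ne_nil_of_length_pos (by simp only [List.length_dropLast]; omega)) rfl
    refine ⟨p, v, q ++ [w.getLast hne], hv, ?_⟩
    rw [← List.append_assoc, ← he, List.dropLast_append_getLast]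

theorem isSc_iff {w : List A} {s : List (List A)} :
    IsSc L w s ↔ (w ∈ L ∧ s = [w]) ∨
      ∃ p v q s₁ s₂, v ∈ Ddot L ∧ IsSc L (p ++ v.dropLast) s₁ ∧ IsSc L (v.tail ++ q) s₂ ∧
        w = p ++ v ++ q ∧ s = s₁ ++ v :: s₂ := by
  constructor
  · rintro (⟨w, hw⟩ | ⟨p, q, v, s₁, s₂, hv, h₁, h₂⟩)
    · exact .inl ⟨hw, rfl⟩
    · exact .inr ⟨p, v, q, s₁, s₂, hv, h₁, h₂, rfl, rfl⟩
  · rintro (⟨hw, rfl⟩ | ⟨p, v, q, s₁, s₂, hv, h₁, h₂, rfl, rfl⟩)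
    · exact .base w hw
    · exact .step p q v s₁ s₂ hv h₁ h₂

theorem exists_isSc (hE : [] ∉ L) (hA : ∀ a : A, [a] ∈ L) {w : List A} (hne : w ≠ []) :
    ∃ s, IsSc L w s := by
  induction hn : w.length using Nat.strong_induction_on generalizing w with
  | _ n ih =>
  by_cases hw : w ∈ L
  · exact ⟨[w], .base w hw⟩
  obtain ⟨p, v, q, hv, rfl⟩ := exists_mem_ddot_of_notMem hA hw hne
  have hv2 := two_le_length_of_mem_ddot hE hv
  simp only [List.length_append] at hn
  have hlen₁ : (p ++ v.dropLast).length = p.length + (v.length - 1) := by simp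
  have hlen₂ : (v.tail ++ q).length = v.length - 1 + q.length := by simp
  obtain ⟨s₁, hs₁⟩ := ih _ (by omega) (List.ne_nil_of_length_pos (by omega)) hlen₁
  obtain ⟨s₂, hs₂⟩ := ih _ (by omega) (List.ne_nil_of_length_pos (by omega)) hlen₂
  exact ⟨_, .step p q v s₁ s₂ hv hs₁ hs₂⟩

namespace IsSc

theorem ne_nil {w : List A} {s : List (List A)} (h : IsSc L w s) : s ≠ [] := by
  cases h <;> simp

theorem headI_mem {w : List A} {s : List (List A)} (h : IsSc L w s) : s.headI ∈ L := by
  induction h with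
  | base w hw => exact hw
  | step _ _ _ s₁ _ _ h₁ _ ih₁ _ =>
    obtain ⟨x, xs, rfl⟩ := List.exists_cons_of_ne_nil h₁.ne_nil
    exact ih₁

theorem getLastD_mem {w : List A} {s : List (List A)} (h : IsSc L w s) : s.getLastD [] ∈ L := by
  induction h with
  | base w hw => exact hw
  | step _ _ _ _ s₂ _ _ h₂ _ ih₂ =>
    obtain ⟨x, xs, rfl⟩ := List.exists_cons_of_ne_nil h₂.ne_nil
    simpa only [List.getLastD_eq_getLast?, List.getLast?_append_cons, List.getLast?_cons_cons]
      using ih₂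

/-- In the crossing case both coordinate sequences are refined to `s₁ v r u t₂`, where `r` is the
sequence of the word strictly between the first letter of `v` and the last letter of `u`. -/
theorem eq_of_overlap (hL : IsFactorial L) {p₁ v q₁ p₂ u q₂ c d : List A}
    {s₁ s₂ t₁ t₂ : List (List A)}
    (ih : ∀ w' : List A, w'.length < (p₁ ++ v ++ q₁).length →
      ∀ {s t}, IsSc L w' s → IsSc L w' t → s = t)
    (h : p₁ ++ v ++ q₁ = p₂ ++ u ++ q₂) (hv : v ∈ Ddot L) (hu : u ∈ Ddot L)
    (hq₁ : v.tail ++ q₁ = c ++ u ++ q₂) (hp₂ : p₂ ++ u.dropLast = p₁ ++ v ++ d)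
    (hcd : v.tail ++ d = c ++ u.dropLast)
    (hs₁ : IsSc L (p₁ ++ v.dropLast) s₁) (hs₂ : IsSc L (v.tail ++ q₁) s₂)
    (ht₁ : IsSc L (p₂ ++ u.dropLast) t₁) (ht₂ : IsSc L (u.tail ++ q₂) t₂) :
    s₁ ++ v :: s₂ = t₁ ++ u :: t₂ := by
  have hv2 := two_le_length_of_mem_ddot hL.nil_notMem hv
  have hu2 := two_le_length_of_mem_ddot hL.nil_notMem hu
  have hlen := congrArg List.length h
  simp only [List.length_append] at hlen
  obtain ⟨r, hr⟩ := exists_isSc hL.nil_notMem hL.singleton_mem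
    (w := v.tail ++ d)
    (List.ne_nil_of_length_pos (by rw [hcd, List.length_append, List.length_dropLast]; omega))
  have ht₁' : t₁ = s₁ ++ v :: r := by
    refine ih _ (by simp only [List.length_append, List.length_dropLast]; omega) ht₁ ?_
    rw [hp₂]
    exact .step p₁ d v s₁ r hv hs₁ hr
  have hs₂' : s₂ = r ++ u :: t₂ := by
    refine ih _ (by simp only [List.length_append, List.length_tail]; omega) hs₂ ?_
    rw [hq₁]
    exact .step c q₂ u r t₂ hu (hcd ▸ hr) ht₂
  simp [ht₁', hs₂']

theorem eq (hL : IsFactorial L) {w : List A} {s t : List (List A)} (hs : IsSc L w s)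
    (ht : IsSc L w t) : s = t := by
  induction hn : w.length using Nat.strong_induction_on generalizing w s t with
  | _ n ih =>
  subst hn
  rcases isSc_iff.1 hs with ⟨hw, rfl⟩ | ⟨p₁, v, q₁, s₁, s₂, hv, hs₁, hs₂, rfl, rfl⟩ <;>
    rcases isSc_iff.1 ht with ⟨hw', rfl⟩ | ⟨p₂, u, q₂, t₁, t₂, hu, ht₁, ht₂, h, rfl⟩
  · rfl
  · exact absurd (h ▸ List.infix_append p₂ u q₂) (not_infix_of_mem_ddot hL hu hw)
  · exact absurd (List.infix_append p₁ v q₁) (not_infix_of_mem_ddot hL hv hw')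
  have ih' : ∀ w' : List A, w'.length < (p₁ ++ v ++ q₁).length →
      ∀ {s t}, IsSc L w' s → IsSc L w' t → s = t :=
    fun w' hw' _ _ hs ht => ih _ hw' hs ht rfl
  rcases eq_or_overlap_of_mem_ddot hL hv hu h with
    ⟨rfl, rfl, rfl⟩ | ⟨c, d, hq, hp, hcd⟩ | ⟨c, d, hq, hp, hcd⟩
  · have hv2 := two_le_length_of_mem_ddot hL.nil_notMem hv
    rw [ih' _ (by simp only [List.length_append, List.length_dropLast]; omega) hs₁ ht₁,
      ih' _ (by simp only [List.length_append, List.length_tail]; omega) hs₂ ht₂]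
  · exact eq_of_overlap hL ih' h hv hu hq hp hcd hs₁ hs₂ ht₁ ht₂
  · exact (eq_of_overlap hL (h ▸ ih') h.symm hu hv hq hp hcd ht₁ ht₂ hs₁ hs₂).symm

end IsSc

theorem scL_eq (hL : IsFactorial L) {w : List A} {s : List (List A)} (h : IsSc L w s) :
    scL L w = s := by
  have hex : ∃ s, IsSc L w s := ⟨s, h⟩
  rw [scL, dif_pos hex]
  exact hex.choose_spec.eq hL h

theorem scL_of_mem (hL : IsFactorial L) {w : List A} (hw : w ∈ L) : scL L w = [w] :=
  scL_eq hL (.base w hw)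

namespace IsSc

theorem append_left {z : List A} {t : List (List A)} (ht : IsSc L z t) :
    ∀ {w : List A} {m : List (List A)}, IsSc L (w ++ t.headI) m →
      IsSc L (w ++ z) (m ++ t.tail) := by
  induction ht with
  | base z _ => intro w m hm; simpa using hm
  | step z' z'' u t₁ t₂ hu h₁ h₂ ih₁ _ =>
    intro w m hm
    obtain ⟨x, xs, rfl⟩ := List.exists_cons_of_ne_nil h₁.ne_nil
    have h := ih₁ (w := w) (m := m) (by simpa using hm)
    rw [← List.append_assoc] at h
    simpa using IsSc.step (w ++ z') z'' u (m ++ xs) t₂ hu h h₂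

theorem append_right {w : List A} {s : List (List A)} (hs : IsSc L w s) :
    ∀ {z : List A} {m : List (List A)}, IsSc L (s.getLastD [] ++ z) m →
      IsSc L (w ++ z) (s.dropLast ++ m) := by
  induction hs with
  | base w _ => intro z m hm; simpa using hm
  | step p q v s₁ s₂ hv h₁ h₂ _ ih₂ =>
    intro z m hm
    obtain ⟨x, xs, rfl⟩ := List.exists_cons_of_ne_nil h₂.ne_nil
    have h := ih₂ (z := z) (m := m) (by
      simpa only [List.getLastD_eq_getLast?, List.getLast?_append_cons, List.getLast?_cons_cons]
        using hm)
    rw [List.append_assoc] at h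
    simpa [List.dropLast_append_of_ne_nil] using IsSc.step p (q ++ z) v s₁ _ hv h₁ h

theorem append {w z : List A} {s t m : List (List A)} (hs : IsSc L w s) (ht : IsSc L z t)
    (hm : IsSc L (s.getLastD [] ++ t.headI) m) :
    IsSc L (w ++ z) (s.dropLast ++ (m ++ t.tail)) :=
  hs.append_right (ht.append_left hm)

end IsSc

end Coordinates

section MixedWords

@[simp] theorem takeA_map_inl_append (u : List A) (r : List (A ⊕ A_G)) :
    takeA (u.map Sum.inl ++ r) = u ++ takeA r := by
  induction u with
  | nil => rfl
  | cons a u ih => simp [takeA, ih]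

@[simp] theorem dropA_map_inl_append (u : List A) (r : List (A ⊕ A_G)) :
    dropA (u.map Sum.inl ++ r) = dropA r := by
  induction u with
  | nil => rfl
  | cons a u ih => simp [dropA, ih]

@[simp] theorem takeG_map_inr_append (g : List A_G) (r : List (A ⊕ A_G)) :
    takeG (g.map Sum.inr ++ r) = g ++ takeG r := by
  induction g with
  | nil => rfl
  | cons b g ih => simp [takeG, ih]

@[simp] theorem dropG_map_inr_append (g : List A_G) (r : List (A ⊕ A_G)) :
    dropG (g.map Sum.inr ++ r) = dropG r := by
  induction g with
  | nil => rfl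
  | cons b g ih => simp [dropG, ih]

theorem takeA_map_inr_append {g : List A_G} (hg : g ≠ []) (r : List (A ⊕ A_G)) :
    takeA (g.map Sum.inr ++ r) = [] := by
  obtain ⟨b, g, rfl⟩ := List.exists_cons_of_ne_nil hg
  rfl

theorem dropA_map_inr_append {g : List A_G} (hg : g ≠ []) (r : List (A ⊕ A_G)) :
    dropA (g.map Sum.inr ++ r) = g.map Sum.inr ++ r := by
  obtain ⟨b, g, rfl⟩ := List.exists_cons_of_ne_nil hg
  rfl

theorem takeG_map_inl_append {u : List A} (hu : u ≠ []) (r : List (A ⊕ A_G)) :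
    takeG (u.map Sum.inl ++ r) = [] := by
  obtain ⟨a, u, rfl⟩ := List.exists_cons_of_ne_nil hu
  rfl

theorem dropG_map_inl_append {u : List A} (hu : u ≠ []) (r : List (A ⊕ A_G)) :
    dropG (u.map Sum.inl ++ r) = u.map Sum.inl ++ r := by
  obtain ⟨a, u, rfl⟩ := List.exists_cons_of_ne_nil hu
  rfl

@[simp] theorem takeA_map_inl (u : List A) : takeA (u.map Sum.inl : List (A ⊕ A_G)) = u := by
  induction u with
  | nil => rfl
  | cons a u ih => simp [takeA, ih]

@[simp] theorem dropA_map_inl (u : List A) : dropA (u.map Sum.inl : List (A ⊕ A_G)) = [] := by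
  induction u with
  | nil => rfl
  | cons a u ih => simp [dropA, ih]

@[simp] theorem takeG_map_inl (u : List A) : takeG (u.map Sum.inl : List (A ⊕ A_G)) = [] := by
  cases u <;> rfl

@[simp] theorem dropG_map_inl (u : List A) :
    dropG (u.map Sum.inl : List (A ⊕ A_G)) = u.map Sum.inl := by
  cases u <;> rfl

variable [Group G] {L : Set (List A)} {f : List A → G} {evA : A_G → G} {rep : G → List A_G}

theorem checkOfSeq_cons_append_singleton (c : List A) (s : List (List A)) (a : List A) :
    checkOfSeq f rep (c :: (s ++ [a])) =
      c.map Sum.inl ++ (rep (s.map f).prod).map Sum.inr ++ a.map Sum.inl := by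
  rcases s with _ | ⟨x, s⟩
  · rfl
  · change c.map Sum.inl ++ (rep (((x :: s ++ [a]).dropLast).map f).prod).map Sum.inr ++
      ((x :: s ++ [a]).getLastD []).map Sum.inl = _
    rw [List.dropLast_concat, List.getLastD_concat]

theorem midRunAux_succ_of_dropA_dropG_eq_nil {n : ℕ} {W : List (A ⊕ A_G)}
    (h : dropA (dropG W) = []) :
    midRunAux L f evA (n + 1) W =
      (evalW evA (takeG W) * acuteG L f (takeA (dropG W)), acuteWord L (takeA (dropG W))) := by
  rw [midRunAux, h]

theorem midRunAux_succ_of_dropA_dropG_ne_nil {n : ℕ} {W : List (A ⊕ A_G)}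
    (h : dropA (dropG W) ≠ []) :
    midRunAux L f evA (n + 1) W =
      (evalW evA (takeG W) * fhat L f (takeA (dropG W)) *
        (midRunAux L f evA n (dropA (dropG W))).1, (midRunAux L f evA n (dropA (dropG W))).2) := by
  obtain ⟨x, r, hx⟩ := List.exists_cons_of_ne_nil h
  rw [midRunAux, hx]

theorem midRunAux_map_inr_append_map_inl {n : ℕ} (hn : n ≠ 0) (g : List A_G) (v : List A) :
    midRunAux L f evA n (g.map Sum.inr ++ v.map Sum.inl) =
      (evalW evA g * acuteG L f v, acuteWord L v) := by
  obtain ⟨n, rfl⟩ := Nat.exists_eq_succ_of_ne_zero hn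
  rw [midRunAux_succ_of_dropA_dropG_eq_nil (by simp)]
  simp

theorem fcheckX_map_inl (u : List A) :
    fcheckX L f evA rep (u.map Sum.inl) = checkOfSeq f rep (scL L u) := by
  rw [fcheckX, dropA_map_inl, takeA_map_inl]

theorem fcheckX_of_dropA_ne_nil {W : List (A ⊕ A_G)} (h : dropA W ≠ []) :
    fcheckX L f evA rep W =
      (graveWord L (takeA W)).map Sum.inl ++
        (rep (graveG L f (takeA W) *
          (midRunAux L f evA (dropA W).length (dropA W)).1)).map Sum.inr ++
        (midRunAux L f evA (dropA W).length (dropA W)).2.map Sum.inl := by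
  obtain ⟨x, r, hx⟩ := List.exists_cons_of_ne_nil h
  rw [fcheckX, hx]

theorem fcheckX_inl_inr_inl (u : List A) {g : List A_G} (hg : g ≠ []) (v : List A) :
    fcheckX L f evA rep (u.map Sum.inl ++ g.map Sum.inr ++ v.map Sum.inl) =
      (graveWord L u).map Sum.inl ++
        (rep (graveG L f u * evalW evA g * acuteG L f v)).map Sum.inr ++
        (acuteWord L v).map Sum.inl := by
  have hd : dropA (u.map Sum.inl ++ g.map Sum.inr ++ v.map Sum.inl) =
      g.map Sum.inr ++ v.map Sum.inl := by
    rw [List.append_assoc, dropA_map_inl_append, dropA_map_inr_append hg]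
  rw [fcheckX_of_dropA_ne_nil (by rw [hd]; simp [hg]), hd,
    midRunAux_map_inr_append_map_inl (by simp [hg])]
  simp [takeA_map_inr_append hg, mul_assoc]

theorem fcheckX_inl_inr_inl_inr_inl (u : List A) {g : List A_G} (hg : g ≠ []) {v : List A}
    (hv : v ≠ []) {h : List A_G} (hh : h ≠ []) (x : List A) :
    fcheckX L f evA rep
        (u.map Sum.inl ++ g.map Sum.inr ++ v.map Sum.inl ++ h.map Sum.inr ++ x.map Sum.inl) =
      (graveWord L u).map Sum.inl ++
        (rep (graveG L f u * evalW evA g * fhat L f v * evalW evA h * acuteG L f x)).map Sum.inr ++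
        (acuteWord L x).map Sum.inl := by
  set R : List (A ⊕ A_G) := g.map Sum.inr ++ v.map Sum.inl ++ h.map Sum.inr ++ x.map Sum.inl
    with hR
  have hd : dropA (u.map Sum.inl ++ R) = R := by
    rw [dropA_map_inl_append, hR, List.append_assoc, List.append_assoc, dropA_map_inr_append hg]
  have hRl : R.length = (R.length - 1) + 1 := by
    have := List.length_pos_of_ne_nil hg
    simp only [hR, List.length_append, List.length_map]; omega
  have hdd : dropA (dropG R) = h.map Sum.inr ++ x.map Sum.inl := by
    rw [hR, List.append_assoc, List.append_assoc, dropG_map_inr_append,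
      dropG_map_inl_append hv, dropA_map_inl_append, dropA_map_inr_append hh]
  have hfuel : R.length - 1 ≠ 0 := by
    have := List.length_pos_of_ne_nil hv
    have := List.length_pos_of_ne_nil hh
    simp only [hR, List.length_append, List.length_map]; omega
  rw [show u.map Sum.inl ++ g.map Sum.inr ++ v.map Sum.inl ++ h.map Sum.inr ++ x.map Sum.inl =
      u.map Sum.inl ++ R by simp [hR], fcheckX_of_dropA_ne_nil (by rw [hd]; simp [hR, hg]),
    hd, hRl, midRunAux_succ_of_dropA_dropG_ne_nil (by simp [hdd, hh]), hdd,
    midRunAux_map_inr_append_map_inl hfuel]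
  simp [hR, takeA_map_inr_append hg, takeG_map_inl_append hv, dropG_map_inl_append hv,
    takeA_map_inr_append hh, mul_assoc]

theorem checkOfSeq_singleton (u : List A) :
    checkOfSeq f rep [u] = (u.map Sum.inl : List (A ⊕ A_G)) := rfl

theorem checkOfSeq_glue_eq_fcheckX (hL : IsFactorial L) (hrepne : ∀ g : G, rep g ≠ [])
    (hrep : ∀ g : G, evalW evA (rep g) = g) {s t m : List (List A)} {a b : List A}
    (hc : (s ++ [a]).headI ∈ L) (hb : b ≠ []) (hz : (b :: t).getLastD [] ∈ L)
    (hm : scL L (a ++ b) = m) (hm₀ : m ≠ []) :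
    checkOfSeq f rep (s ++ (m ++ t)) =
      fcheckX L f evA rep (checkOfSeq f rep (s ++ [a]) ++ checkOfSeq f rep (b :: t)) := by
  rcases s with _ | ⟨c, s⟩ <;> rcases List.eq_nil_or_concat' t with rfl | ⟨t, z, rfl⟩
  · rw [List.nil_append, List.append_nil, List.nil_append, checkOfSeq_singleton,
      checkOfSeq_singleton, ← List.map_append, fcheckX_map_inl, hm]
  · rw [← List.cons_append, List.getLastD_concat] at hz
    obtain ⟨m₀, m, rfl⟩ := List.exists_cons_of_ne_nil hm₀
    have key := fcheckX_inl_inr_inl (L := L) (f := f) (evA := evA) (rep := rep) (a ++ b)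
      (hrepne (t.map f).prod) z
    rw [graveWord, graveG, hm, acuteG, acuteWord, scL_of_mem hL hz, hrep] at key
    rw [List.nil_append, List.nil_append,
      show m₀ :: m ++ (t ++ [z]) = m₀ :: (m ++ t ++ [z]) by simp,
      checkOfSeq_cons_append_singleton, checkOfSeq_singleton, checkOfSeq_cons_append_singleton]
    simp only [List.map_append, List.append_assoc] at key ⊢
    simp [key]
  · rw [List.cons_append, List.headI_cons] at hc
    obtain ⟨m, y, rfl⟩ := (List.eq_nil_or_concat' m).resolve_left hm₀
    have key := fcheckX_inl_inr_inl (L := L) (f := f) (evA := evA) (rep := rep) c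
      (hrepne (s.map f).prod) (a ++ b)
    rw [graveWord, graveG, acuteG, acuteWord, hm, scL_of_mem hL hc, hrep] at key
    rw [show c :: s ++ (m ++ [y] ++ []) = c :: (s ++ m ++ [y]) by simp, List.cons_append,
      checkOfSeq_cons_append_singleton, checkOfSeq_singleton, checkOfSeq_cons_append_singleton]
    simp only [List.map_append, List.append_assoc] at key ⊢
    simp [key]
  · rw [List.cons_append, List.headI_cons] at hc
    rw [← List.cons_append, List.getLastD_concat] at hz
    have key := fcheckX_inl_inr_inl_inr_inl (L := L) (f := f) (evA := evA) (rep := rep) c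
      (hrepne (s.map f).prod) (v := a ++ b) (by simp [hb]) (hrepne (t.map f).prod) z
    rw [graveWord, graveG, acuteG, acuteWord, fhat, hm, scL_of_mem hL hc, scL_of_mem hL hz,
      hrep, hrep] at key
    rw [show c :: s ++ (m ++ (t ++ [z])) = c :: (s ++ m ++ t ++ [z]) by simp, List.cons_append,
      checkOfSeq_cons_append_singleton, checkOfSeq_cons_append_singleton,
      checkOfSeq_cons_append_singleton]
    simp only [List.map_append, List.append_assoc] at key ⊢
    simp [key, mul_assoc]

theorem IsSc.checkOfSeq_glue (hL : IsFactorial L) (hrepne : ∀ g : G, rep g ≠ [])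
    (hrep : ∀ g : G, evalW evA (rep g) = g) {w z : List A} {s t m : List (List A)}
    (hs : IsSc L w s) (ht : IsSc L z t) (hm : IsSc L (s.getLastD [] ++ t.headI) m) :
    checkOfSeq f rep (s.dropLast ++ (m ++ t.tail)) =
      fcheckX L f evA rep (checkOfSeq f rep s ++ checkOfSeq f rep t) := by
  have hm' := scL_eq hL hm
  obtain ⟨s, a, rfl⟩ := (List.eq_nil_or_concat' s).resolve_left hs.ne_nil
  obtain ⟨b, t, rfl⟩ := List.exists_cons_of_ne_nil ht.ne_nil
  rw [List.getLastD_concat, List.headI_cons] at hm'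
  rw [List.dropLast_concat, List.tail_cons]
  exact checkOfSeq_glue_eq_fcheckX hL hrepne hrep hs.headI_mem
    (fun hb => hL.nil_notMem (hb ▸ ht.headI_mem)) ht.getLastD_mem hm' hm.ne_nil

end MixedWords

theorem fcheck_append_general [Group G]
    (L : Set (List A)) (hE : [] ∉ L)
    (hFac : ∀ u w : List A, w ∈ L → u ≠ [] → u <:+: w → u ∈ L)
    (hA : ∀ a : A, [a] ∈ L)
    (f : List A → G) (evA : A_G → G) (rep : G → List A_G)
    (hrepne : ∀ g : G, rep g ≠ [])
    (hrep : ∀ g : G, evalW evA (rep g) = g)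
    (w z : List A) (hw : w ≠ []) (hz : z ≠ []) :
    checkOfSeq f rep (scL L (w ++ z)) =
      fcheckX L f evA rep
        (checkOfSeq f rep (scL L w) ++ checkOfSeq f rep (scL L z)) := by
  have hL : IsFactorial L := ⟨hE, hFac, hA⟩
  obtain ⟨s, hs⟩ := exists_isSc hE hA hw
  obtain ⟨t, ht⟩ := exists_isSc hE hA hz
  obtain ⟨m, hm⟩ := exists_isSc hE hA (w := s.getLastD [] ++ t.headI)
    (List.append_ne_nil_of_left_ne_nil (fun h => hE (h ▸ hs.getLastD_mem)) _)
  rw [scL_eq hL hs, scL_eq hL ht, scL_eq hL (hs.append ht hm)]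
  exact hs.checkOfSeq_glue hL hrepne hrep ht hm

/-- Lemma 1(2). For all `w, z ∈ A⁺`,
`f̌(wz) = f̌(f̌(w) f̌(z))`, where `wz` is concatenation of words over `A` and
`f̌(w) f̌(z)` is concatenation of the words `f̌(w), f̌(z)` over `X = A ⊕ A_G`. -/
theorem fcheck_append [Nonempty A] [Group G]
    (L : Set (List A)) (hE : [] ∉ L)
    (hFac : ∀ u w : List A, w ∈ L → u ≠ [] → u <:+: w → u ∈ L)
    (hA : ∀ a : A, [a] ∈ L)
    (f : List A → G) (evA : A_G → G) (rep : G → List A_G)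
    (hrepne : ∀ g : G, rep g ≠ [])
    (hrep : ∀ g : G, evalW evA (rep g) = g)
    (w z : List A) (hw : w ≠ []) (hz : z ≠ []) :
    checkOfSeq f rep (scL L (w ++ z)) =
      fcheckX L f evA rep
        (checkOfSeq f rep (scL L w) ++ checkOfSeq f rep (scL L z)) :=
  fcheck_append_general L hE hFac hA f evA rep hrepne hrep w z hw hz
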